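/- For |q|<1 and w ≠ 0 with w ∉ {q^ℓ : ℓ ∈ ℕ₀}, the series g_{3,3}(w;q^{-1}) := ∑_{n≥0} w^{-n} q^{-n}/(w;q^{-1})_{n+1} equals ψ₁(w^{-1};q), where ψ₁(w;q) := −w − w² ∑_{n≥0} (12/n) w^{(n−1)/2} q^{(n²−1)/24}. -/

import Mathlib

noncomputable def qPoch (a q : ℂ) (n : ℕ) : ℂ :=
  ∏ j ∈ Finset.range n, (1 - a * q ^ j)
/-- The Kronecker symbol `(12/n)`. -/
def kron12 (n : ℕ) : ℤ :=
  if n % 12 = 1 ∨ n % 12 = 11 then 1 else if n % 12 = 5 ∨ n % 12 = 7 then -1 else 0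

/-- The partial theta function ψ₁(w;q). -/
noncomputable def psi1 (w q : ℂ) : ℂ :=
  -w - w ^ 2 * ∑' n : ℕ, (kron12 n : ℂ) * w ^ (((n : ℤ) - 1) / 2) * q ^ ((n ^ 2 - 1) / 24)

noncomputable def Tt (x q : ℂ) (n : ℕ) : ℂ :=
  (-1)^n * x^(2*n+1) * q^(n*(n-1)/2) / qPoch x q (n+1)

noncomputable def Uu (x q : ℂ) (n : ℕ) : ℂ :=
  (-1)^n * x^(2*n+1) * q^(n*(n-1)/2) / qPoch x q n

lemma qPoch_succ (a q : ℂ) (n : ℕ) :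
    qPoch a q (n+1) = qPoch a q n * (1 - a * q^n) := Finset.prod_range_succ _ _

lemma qPoch_shift (x q : ℂ) (n : ℕ) :
    qPoch x q (n+1) = (1 - x) * qPoch (x*q) q n := by
  rw [qPoch, Finset.prod_range_succ']
  simp only [pow_zero, mul_one, qPoch]
  rw [mul_comm]
  congr 1
  apply Finset.prod_congr rfl
  intro j _
  ring

lemma qPoch_ne_zero {x q : ℂ} (hx : ∀ ℓ : ℕ, 1 - x * q^ℓ ≠ 0) (n : ℕ) :
    qPoch x q n ≠ 0 :=
  Finset.prod_ne_zero_iff.2 fun j _ => hx j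

lemma tri_succ (n : ℕ) : (n+1)*n/2 = n*(n-1)/2 + n := by
  obtain ⟨m, hm⟩ : Even (n*(n-1)) := by
    rcases n with _ | m
    · simp
    · simpa [Nat.succ_sub_one, mul_comm] using (Nat.even_mul_succ_self m)
  have h2 : (n+1)*n = n*(n-1) + 2*n := by
    rcases n with _ | m
    · simp
    · simp only [Nat.succ_sub_one]; ring
  omega

lemma tri_succ2 (n : ℕ) : (n+2)*(n+1)/2 = n*(n-1)/2 + (2*n+1) := by
  obtain ⟨m, hm⟩ : Even (n*(n-1)) := by
    rcases n with _ | m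
    · simp
    · simpa [Nat.succ_sub_one, mul_comm] using (Nat.even_mul_succ_self m)
  have h2 : (n+2)*(n+1) = n*(n-1) + 2*(2*n+1) := by
    rcases n with _ | m
    · simp
    · simp only [Nat.succ_sub_one]; ring
  omega

lemma key_alg (x q : ℂ) (n : ℕ) (h0 : (1:ℂ) - x ≠ 0)
    (hQ : qPoch (x*q) q n ≠ 0) (hB : 1 - (x*q) * q^n ≠ 0) :
    Tt x q (n+1) = (Uu x q (n+1) - Uu x q (n+2)) - x^3 * Tt (x*q) q n := by
  have e2 : qPoch x q (n+2) = (1 - x) * (qPoch (x*q) q n * (1 - (x*q)*q^n)) := by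
    rw [show n+2 = n+1+1 from rfl, qPoch_succ, qPoch_shift]
    ring_nf
  have e0 : qPoch x q (n+1) = (1 - x) * qPoch (x*q) q n := qPoch_shift x q n
  have eT : qPoch (x*q) q (n+1) = qPoch (x*q) q n * (1 - (x*q)*q^n) := qPoch_succ _ _ _
  unfold Tt Uu
  rw [show n+1+1 = n+2 from rfl, e2, e0, eT]
  have p1 : (n+1)*((n+1)-1)/2 = n*(n-1)/2 + n := by
    simpa using tri_succ n
  have p2 : (n+2)*((n+2)-1)/2 = n*(n-1)/2 + (2*n+1) := by
    simpa using tri_succ2 n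
  rw [p1, p2]
  set Q := qPoch (x*q) q n with hQdef
  rw [show 2*(n+1)+1 = (2*n+1)+2 by ring, show 2*(n+2)+1 = (2*n+1)+4 by ring,
      pow_add, pow_add, pow_add, pow_add, pow_succ, mul_pow, pow_add]
  have hyQ : (1-x)*Q ≠ 0 := mul_ne_zero h0 hQ
  have hQB : Q * (1 - x*q*q^n) ≠ 0 := mul_ne_zero hQ hB
  have hyQB : (1-x)*(Q*(1 - x*q*q^n)) ≠ 0 := mul_ne_zero h0 hQB
  rw [← mul_div_assoc, div_sub_div _ _ hyQ hyQB, div_sub_div _ _ (mul_ne_zero hyQ hyQB) hQB,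
      div_eq_div_iff hyQB (mul_ne_zero (mul_ne_zero hyQ hyQB) hQB)]
  ring

lemma ev_small {q : ℂ} (hq : ‖q‖ < 1) (c ε : ℝ) (hε : 0 < ε) :
    ∀ᶠ n : ℕ in Filter.atTop, c * ‖q‖^n ≤ ε := by
  have h := (tendsto_pow_atTop_nhds_zero_of_lt_one (norm_nonneg q) hq).const_mul c
  rw [mul_zero] at h
  exact h.eventually (eventually_le_nhds hε)

lemma one_sub_norm_le {z : ℂ} : 1 - ‖z‖ ≤ ‖1 - z‖ := by
  simpa using norm_sub_norm_le (1:ℂ) z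

lemma Tt_succ (x q : ℂ) (n : ℕ) (hP : qPoch x q (n+1) ≠ 0)
    (hB : 1 - x*q^(n+1) ≠ 0) :
    Tt x q (n+1) = Tt x q n * (-(x^2*q^n) / (1 - x*q^(n+1))) := by
  unfold Tt
  rw [show n+1+1 = (n+1)+1 from rfl, qPoch_succ x q (n+1),
      show (n+1)*((n+1)-1)/2 = n*(n-1)/2 + n by simpa using tri_succ n,
      pow_add, show 2*(n+1)+1 = (2*n+1)+2 by ring, pow_add]
  field_simp
  ring

lemma Uu_succ (x q : ℂ) (n : ℕ) (hP : qPoch x q n ≠ 0)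
    (hB : 1 - x*q^n ≠ 0) :
    Uu x q (n+1) = Uu x q n * (-(x^2*q^n) / (1 - x*q^n)) := by
  unfold Uu
  rw [qPoch_succ x q n,
      show (n+1)*((n+1)-1)/2 = n*(n-1)/2 + n by simpa using tri_succ n,
      pow_add, show 2*(n+1)+1 = (2*n+1)+2 by ring, pow_add]
  field_simp
  ring

lemma ratio_aux {x q : ℂ} {n : ℕ} (h1 : ‖x‖^2 * ‖q‖^n ≤ 1/4)
    (h2 : ‖x‖ * ‖q‖^m ≤ 1/2) : ‖-(x^2*q^n) / (1 - x*q^m)‖ ≤ 1/2 := by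
  have hden : (1:ℝ)/2 ≤ ‖1 - x*q^m‖ := by
    have : ‖x*q^m‖ ≤ 1/2 := by rwa [norm_mul, norm_pow]
    have := one_sub_norm_le (z := x*q^m)
    linarith
  have hnum : ‖-(x^2*q^n)‖ ≤ 1/4 := by
    rw [norm_neg, norm_mul, norm_pow, norm_pow]; exact h1
  rw [norm_div]
  calc ‖-(x^2*q^n)‖ / ‖1 - x*q^m‖ ≤ (1/4) / (1/2) :=
        div_le_div₀ (by norm_num) hnum (by norm_num) hden
    _ = 1/2 := by norm_num

lemma summable_Tt (x q : ℂ) (hq : ‖q‖ < 1) (hx : ∀ ℓ : ℕ, 1 - x * q^ℓ ≠ 0) :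
    Summable (Tt x q) := by
  apply summable_of_ratio_norm_eventually_le (r := 1/2) (by norm_num)
  filter_upwards [ev_small hq (‖x‖^2) (1/4) (by norm_num),
    (ev_small hq ‖x‖ (1/2) (by norm_num)).mono (fun n h => h)] with n h1 h2
  have h2' : ‖x‖ * ‖q‖^(n+1) ≤ 1/2 := by
    have : ‖x‖ * ‖q‖^(n+1) ≤ ‖x‖ * ‖q‖^n := by
      apply mul_le_mul_of_nonneg_left _ (norm_nonneg x)
      exact pow_le_pow_of_le_one (norm_nonneg q) (le_of_lt hq) (Nat.le_succ n)
    linarith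
  rw [Tt_succ x q n (qPoch_ne_zero hx (n+1)) (hx (n+1)), norm_mul]
  calc ‖Tt x q n‖ * ‖-(x^2*q^n) / (1 - x*q^(n+1))‖
      ≤ ‖Tt x q n‖ * (1/2) :=
        mul_le_mul_of_nonneg_left (ratio_aux h1 h2') (norm_nonneg _)
    _ = 1/2 * ‖Tt x q n‖ := by ring

lemma summable_Uu (x q : ℂ) (hq : ‖q‖ < 1) (hx : ∀ ℓ : ℕ, 1 - x * q^ℓ ≠ 0) :
    Summable (Uu x q) := by
  apply summable_of_ratio_norm_eventually_le (r := 1/2) (by norm_num)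
  filter_upwards [ev_small hq (‖x‖^2) (1/4) (by norm_num),
    ev_small hq ‖x‖ (1/2) (by norm_num)] with n h1 h2
  rw [Uu_succ x q n (qPoch_ne_zero hx n) (hx n), norm_mul]
  calc ‖Uu x q n‖ * ‖-(x^2*q^n) / (1 - x*q^n)‖
      ≤ ‖Uu x q n‖ * (1/2) :=
        mul_le_mul_of_nonneg_left (ratio_aux h1 h2) (norm_nonneg _)
    _ = 1/2 * ‖Uu x q n‖ := by ring

noncomputable def Gg (x q : ℂ) (n : ℕ) : ℂ :=
  (kron12 n : ℂ) * x ^ (((n : ℤ) - 1) / 2) * q ^ ((n ^ 2 - 1) / 24)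

lemma kron12_add6 (n : ℕ) : kron12 (n+6) = - kron12 n := by
  unfold kron12
  have h : (n+6) % 12 = (n % 12 + 6) % 12 := by omega
  have h12 : n % 12 < 12 := Nat.mod_lt _ (by norm_num)
  interval_cases hn : n % 12 <;> simp [h, hn]

lemma kron12_cases (n : ℕ) :
    kron12 n = 0 ∨ (kron12 n ≠ 0 ∧ n % 2 = 1 ∧ n^2 % 24 = 1) := by
  by_cases hk : n % 12 = 1 ∨ n % 12 = 11 ∨ n % 12 = 5 ∨ n % 12 = 7
  · right
    constructor
    · unfold kron12
      rcases hk with h | h | h | h <;> simp [h]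
    constructor
    · omega
    · rcases hk with h | h | h | h
      · obtain ⟨k, hn⟩ : ∃ k, n = 12*k+1 := ⟨n/12, by omega⟩
        have : n^2 = 24*(6*k^2+k)+1 := by subst hn; ring
        omega
      · obtain ⟨k, hn⟩ : ∃ k, n = 12*k+11 := ⟨n/12, by omega⟩
        have : n^2 = 24*(6*k^2+11*k+5)+1 := by subst hn; ring
        omega
      · obtain ⟨k, hn⟩ : ∃ k, n = 12*k+5 := ⟨n/12, by omega⟩
        have : n^2 = 24*(6*k^2+5*k+1)+1 := by subst hn; ring
        omega
      · obtain ⟨k, hn⟩ : ∃ k, n = 12*k+7 := ⟨n/12, by omega⟩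
        have : n^2 = 24*(6*k^2+7*k+2)+1 := by subst hn; ring
        omega
  · left
    unfold kron12
    have h1 : ¬ (n % 12 = 1 ∨ n % 12 = 11) := by omega
    have h2 : ¬ (n % 12 = 5 ∨ n % 12 = 7) := by omega
    simp [h1, h2]

lemma kron12_abs_le (n : ℕ) : |kron12 n| ≤ 1 := by
  unfold kron12
  split_ifs <;> simp

lemma Gg_zero_of_kron {x q : ℂ} {n : ℕ} (h : kron12 n = 0) : Gg x q n = 0 := by
  simp [Gg, h]

lemma Gg_add6 (x q : ℂ) (hx0 : x ≠ 0) (hq0 : q ≠ 0) (n : ℕ) :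
    Gg x q (n+6) = -(x^3*q^2) * Gg (x*q) q n := by
  rcases kron12_cases n with h | ⟨h, hodd, hsq⟩
  · rw [Gg_zero_of_kron (by rw [kron12_add6, h, neg_zero]), Gg_zero_of_kron h, mul_zero]
  · obtain ⟨m, hm⟩ : ∃ m, n = 2*m+1 := ⟨n/2, by omega⟩
    obtain ⟨t, ht⟩ : ∃ t, n^2 = 24*t+1 := ⟨n^2/24, by omega⟩
    have e1 : (((n:ℤ)) - 1) / 2 = (m : ℤ) := by omega
    have e2 : ((((n+6):ℕ) : ℤ) - 1) / 2 = (m : ℤ) + 3 := by push_cast; omega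
    have e3 : ((n+6)^2 - 1) / 24 = t + m + 2 := by
      have h6 : (n+6)^2 = n^2 + 12*n + 36 := by ring
      omega
    have e4 : (n^2 - 1) / 24 = t := by omega
    rw [Gg, Gg, kron12_add6, e1, e2, e3, e4]
    have z1 : x ^ ((m:ℤ) + 3) = x ^ m * x ^ 3 := by
      rw [zpow_add₀ hx0, zpow_natCast, show (3:ℤ) = ((3:ℕ):ℤ) by norm_num, zpow_natCast]
    have z2 : (x*q) ^ ((m:ℤ)) = x^m * q^m := by rw [zpow_natCast, mul_pow]
    rw [z1, z2, pow_add, pow_add]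
    push_cast
    ring

lemma summable_maj {q : ℂ} (hq : ‖q‖ < 1) (hq0 : q ≠ 0) (M : ℝ) (hM : 1 ≤ M) :
    Summable (fun n : ℕ => M^n * ‖q‖^((n^2-1)/24)) := by
  have hq0' : 0 < ‖q‖ := norm_pos_iff.2 hq0
  -- choose K with M * ‖q‖^K ≤ 1/2
  obtain ⟨K, hK⟩ : ∃ K : ℕ, M * ‖q‖^K ≤ 1/2 := by
    exact (ev_small hq M (1/2) (by norm_num)).exists
  apply summable_of_ratio_norm_eventually_le (r := 1/2) (by norm_num)
  filter_upwards [Filter.eventually_atTop.2 ⟨12*K+12, fun n hn => hn⟩] with n hn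
  have hmono : (n^2-1)/24 ≤ ((n+1)^2-1)/24 := by
    have h1 : (n+1)^2 = n^2 + 2*n + 1 := by ring
    omega
  have hd : ((n+1)^2-1)/24 = (n^2-1)/24 + (((n+1)^2-1)/24 - (n^2-1)/24) := by omega
  set d := ((n+1)^2-1)/24 - (n^2-1)/24 with hdd
  have hdK : K ≤ d := by
    have h1 : (n+1)^2 = n^2 + 2*n + 1 := by ring
    omega
  have hqd : ‖q‖^d ≤ ‖q‖^K := pow_le_pow_of_le_one (norm_nonneg q) (le_of_lt hq) hdK
  have hpos : ∀ m k : ℕ, (0:ℝ) ≤ M^m * ‖q‖^k := fun m k =>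
    mul_nonneg (pow_nonneg (by linarith) m) (pow_nonneg (norm_nonneg q) k)
  rw [Real.norm_of_nonneg (hpos _ _), Real.norm_of_nonneg (hpos _ _), hd, pow_add]
  have hb : M * ‖q‖^d ≤ 1/2 := by
    calc M * ‖q‖^d ≤ M * ‖q‖^K :=
          mul_le_mul_of_nonneg_left hqd (by linarith)
      _ ≤ 1/2 := hK
  have hrw : M^n * M^1 * ‖q‖^((n^2-1)/24 + d)
      = (M^n * ‖q‖^((n^2-1)/24)) * (M * ‖q‖^d) := by rw [pow_add]; ring
  rw [hrw]
  calc (M^n * ‖q‖^((n^2-1)/24)) * (M * ‖q‖^d)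
      ≤ (M^n * ‖q‖^((n^2-1)/24)) * (1/2) :=
        mul_le_mul_of_nonneg_left hb (hpos _ _)
    _ = 1/2 * (M^n * ‖q‖^((n^2-1)/24)) := by ring

lemma Gg_norm_le (x q : ℂ) (hx1 : ‖x‖ ≤ 1) (n : ℕ) :
    ‖Gg x q n‖ ≤ ‖q‖^((n^2-1)/24) := by
  rcases kron12_cases n with h | ⟨h, hodd, _⟩
  · rw [Gg_zero_of_kron h]
    simp [pow_nonneg (norm_nonneg q)]
  · obtain ⟨m, hm⟩ : ∃ m, n = 2*m+1 := ⟨n/2, by omega⟩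
    have e1 : (((n:ℤ)) - 1) / 2 = (m : ℤ) := by omega
    rw [Gg, e1, zpow_natCast, norm_mul, norm_mul, norm_pow, norm_pow]
    have h1 : ‖(kron12 n : ℂ)‖ ≤ 1 := by
      have := kron12_abs_le n
      rw [Complex.norm_intCast]
      exact_mod_cast this
    have h2 : ‖x‖^m ≤ 1 := pow_le_one₀ (norm_nonneg x) hx1
    calc ‖(kron12 n : ℂ)‖ * ‖x‖^m * ‖q‖^((n^2-1)/24)
        ≤ 1 * 1 * ‖q‖^((n^2-1)/24) := by
          apply mul_le_mul_of_nonneg_right _ (pow_nonneg (norm_nonneg q) _)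
          exact mul_le_mul h1 h2 (pow_nonneg (norm_nonneg x) m) zero_le_one
      _ = ‖q‖^((n^2-1)/24) := by ring

noncomputable def Ps (x q : ℂ) : ℂ := ∑' n : ℕ, Gg x q n

lemma psi1_eq (w q : ℂ) : psi1 w q = -w - w^2 * Ps w q := rfl

lemma Gg_norm_le_maj (x q : ℂ) (n : ℕ) :
    ‖Gg x q n‖ ≤ (max 1 ‖x‖)^n * ‖q‖^((n^2-1)/24) := by
  have hM1 : (1:ℝ) ≤ max 1 ‖x‖ := le_max_left _ _
  have hMpos : (0:ℝ) ≤ max 1 ‖x‖ := by linarith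
  rcases kron12_cases n with h | ⟨h, hodd, _⟩
  · rw [Gg_zero_of_kron h]
    simp only [norm_zero]
    exact mul_nonneg (pow_nonneg hMpos n) (pow_nonneg (norm_nonneg q) _)
  · obtain ⟨m, hm⟩ : ∃ m, n = 2*m+1 := ⟨n/2, by omega⟩
    have e1 : (((n:ℤ)) - 1) / 2 = (m : ℤ) := by omega
    rw [Gg, e1, zpow_natCast, norm_mul, norm_mul, norm_pow, norm_pow]
    have h1 : ‖(kron12 n : ℂ)‖ ≤ 1 := by
      have := kron12_abs_le n
      rw [Complex.norm_intCast]
      exact_mod_cast this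
    have h2 : ‖x‖^m ≤ (max 1 ‖x‖)^n := by
      calc ‖x‖^m ≤ (max 1 ‖x‖)^m :=
            pow_le_pow_left₀ (norm_nonneg x) (le_max_right _ _) m
        _ ≤ (max 1 ‖x‖)^n := pow_le_pow_right₀ hM1 (by omega)
    calc ‖(kron12 n : ℂ)‖ * ‖x‖^m * ‖q‖^((n^2-1)/24)
        ≤ 1 * (max 1 ‖x‖)^n * ‖q‖^((n^2-1)/24) := by
          apply mul_le_mul_of_nonneg_right _ (pow_nonneg (norm_nonneg q) _)
          exact mul_le_mul h1 h2 (pow_nonneg (norm_nonneg x) m) zero_le_one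
      _ = (max 1 ‖x‖)^n * ‖q‖^((n^2-1)/24) := by ring

lemma summable_Gg (x q : ℂ) (hq : ‖q‖ < 1) (hq0 : q ≠ 0) : Summable (Gg x q) :=
  Summable.of_norm_bounded (summable_maj hq hq0 (max 1 ‖x‖) (le_max_left _ _))
    (Gg_norm_le_maj x q)

lemma Ps_head (x q : ℂ) :
    ∑ i ∈ Finset.range 6, Gg x q i = 1 - x^2*q := by
  rw [show (6:ℕ) = 5+1 from rfl, Finset.sum_range_succ, Finset.sum_range_succ,
      Finset.sum_range_succ, Finset.sum_range_succ, Finset.sum_range_succ,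
      Finset.sum_range_one]
  have k0 : kron12 0 = 0 := by decide
  have k1 : kron12 1 = 1 := by decide
  have k2 : kron12 2 = 0 := by decide
  have k3 : kron12 3 = 0 := by decide
  have k4 : kron12 4 = 0 := by decide
  have k5 : kron12 5 = -1 := by decide
  simp only [Gg, k0, k1, k2, k3, k4, k5]
  norm_num [zpow_two]
  ring

lemma Ps_feq (x q : ℂ) (hq : ‖q‖ < 1) (hq0 : q ≠ 0) (hx0 : x ≠ 0) :
    Ps x q = 1 - x^2*q - x^3*q^2 * Ps (x*q) q := by
  have hs : Summable (Gg x q) := summable_Gg x q hq hq0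
  have h6 := Summable.sum_add_tsum_nat_add 6 hs
  have htail : ∑' n : ℕ, Gg x q (n+6) = -(x^3*q^2) * Ps (x*q) q := by
    rw [show (fun n : ℕ => Gg x q (n+6)) = fun n => -(x^3*q^2) * Gg (x*q) q n from
        funext (Gg_add6 x q hx0 hq0), tsum_mul_left]
    rfl
  have : (1 - x^2*q) + ∑' n : ℕ, Gg x q (n+6) = Ps x q := by
    rw [← Ps_head x q]; exact h6
  rw [← this, htail]
  ring

lemma psi1_feq (x q : ℂ) (hq : ‖q‖ < 1) (hq0 : q ≠ 0) (hx0 : x ≠ 0) :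
    psi1 x q = -x - x^2 - x^3 * psi1 (x*q) q := by
  rw [psi1_eq, psi1_eq, Ps_feq x q hq hq0 hx0]
  ring

noncomputable def Fdef (x q : ℂ) : ℂ := ∑' n : ℕ, Tt x q n

lemma hx_shift {x q : ℂ} (hx : ∀ ℓ : ℕ, 1 - x * q^ℓ ≠ 0) :
    ∀ ℓ : ℕ, 1 - (x*q) * q^ℓ ≠ 0 := by
  intro ℓ
  have := hx (ℓ+1)
  rwa [show x * q^(ℓ+1) = (x*q) * q^ℓ by rw [pow_succ]; ring] at this

lemma F_feq (x q : ℂ) (hq : ‖q‖ < 1) (hx : ∀ ℓ : ℕ, 1 - x * q^ℓ ≠ 0) :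
    Fdef x q = x + x^2 - x^3 * Fdef (x*q) q := by
  have h0 : (1:ℂ) - x ≠ 0 := by
    have := hx 0; rwa [pow_zero, mul_one] at this
  have hx' := hx_shift hx
  have hsT : Summable (Tt x q) := summable_Tt x q hq hx
  have hsT' : Summable (Tt (x*q) q) := summable_Tt (x*q) q hq hx'
  have hsU : Summable (Uu x q) := summable_Uu x q hq hx
  have h1 : Summable (fun n => Uu x q (n+1)) := (summable_nat_add_iff 1).2 hsU
  have h2 : Summable (fun n => Uu x q (n+2)) := (summable_nat_add_iff 2).2 hsU
  have htel : ∑' n : ℕ, (Uu x q (n+1) - Uu x q (n+2)) = Uu x q 1 := by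
    rw [Summable.tsum_sub h1 h2]
    have h3 := Summable.tsum_eq_zero_add h1
    have h4 : ∑' n : ℕ, Uu x q (n+2) = ∑' n : ℕ, Uu x q (n+1+1) := by norm_num
    linear_combination h3 + h4
  have hkey : ∀ n : ℕ, Tt x q (n+1) =
      (Uu x q (n+1) - Uu x q (n+2)) - x^3 * Tt (x*q) q n :=
    fun n => key_alg x q n h0 (qPoch_ne_zero hx' n) (hx' n)
  have hT0 : Tt x q 0 = x / (1-x) := by
    simp [Tt, qPoch, Finset.prod_range_one]
  have hU1 : Uu x q 1 = -x^3 / (1-x) := by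
    simp [Uu, qPoch, Finset.prod_range_one]
  calc Fdef x q = Tt x q 0 + ∑' n : ℕ, Tt x q (n+1) := Summable.tsum_eq_zero_add hsT
    _ = Tt x q 0 + ∑' n : ℕ,
        ((Uu x q (n+1) - Uu x q (n+2)) - x^3 * Tt (x*q) q n) := by
        rw [tsum_congr hkey]
    _ = Tt x q 0 + (∑' n : ℕ, (Uu x q (n+1) - Uu x q (n+2))
        - ∑' n : ℕ, x^3 * Tt (x*q) q n) := by
        rw [Summable.tsum_sub (h1.sub h2) (hsT'.mul_left (x^3))]
    _ = x/(1-x) + (-x^3/(1-x) - x^3 * Fdef (x*q) q) := by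
        rw [htel, tsum_mul_left, hT0, hU1]; rfl
    _ = x + x^2 - x^3 * Fdef (x*q) q := by
        field_simp
        ring

lemma D_feq (x q : ℂ) (hq : ‖q‖ < 1) (hq0 : q ≠ 0) (hx0 : x ≠ 0)
    (hx : ∀ ℓ : ℕ, 1 - x * q^ℓ ≠ 0) :
    Fdef x q + psi1 x q = -(x^3) * (Fdef (x*q) q + psi1 (x*q) q) := by
  rw [F_feq x q hq hx, psi1_feq x q hq hq0 hx0]
  ring

lemma hx_pow {x q : ℂ} (hx : ∀ ℓ : ℕ, 1 - x * q^ℓ ≠ 0) (N : ℕ) :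
    ∀ ℓ : ℕ, 1 - (x * q^N) * q^ℓ ≠ 0 := by
  intro ℓ
  have := hx (N + ℓ)
  rwa [show x * q^(N+ℓ) = (x*q^N) * q^ℓ by rw [pow_add]; ring] at this

lemma D_iter (x q : ℂ) (hq : ‖q‖ < 1) (hq0 : q ≠ 0) (hx0 : x ≠ 0)
    (hx : ∀ ℓ : ℕ, 1 - x * q^ℓ ≠ 0) (N : ℕ) :
    Fdef x q + psi1 x q = (-1)^N * x^(3*N) * q^(3*(N*(N-1)/2)) *
      (Fdef (x*q^N) q + psi1 (x*q^N) q) := by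
  induction N with
  | zero => simp
  | succ N ih =>
    have hy0 : x * q^N ≠ 0 := mul_ne_zero hx0 (pow_ne_zero N hq0)
    have hstep := D_feq (x*q^N) q hq hq0 hy0 (hx_pow hx N)
    rw [ih, hstep]
    have e1 : 3*((N+1)*N/2) = 3*(N*(N-1)/2) + 3*N := by
      have := tri_succ N; omega
    have e2 : (N+1)*((N+1)-1)/2 = (N+1)*N/2 := by norm_num
    rw [show x*q^N*q = x*q^(N+1) by rw [pow_succ]; ring, e2, e1]
    rw [pow_add, pow_add, pow_succ, pow_mul, pow_mul, pow_mul, mul_pow]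
    ring

lemma qPoch_lower (y q : ℂ) (hq : ‖q‖ < 1) (hy : ‖y‖ ≤ 1/2) (n : ℕ) :
    (1/2:ℝ)^n ≤ ‖qPoch y q n‖ := by
  induction n with
  | zero => simp [qPoch]
  | succ n ih =>
    rw [qPoch_succ, norm_mul, pow_succ]
    have h1 : ‖y * q^n‖ ≤ 1/2 := by
      rw [norm_mul, norm_pow]
      calc ‖y‖ * ‖q‖^n ≤ (1/2) * 1 := by
            apply mul_le_mul hy _ (pow_nonneg (norm_nonneg q) n) (by norm_num)
            exact pow_le_one₀ (norm_nonneg q) (le_of_lt hq)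
        _ = 1/2 := by norm_num
    have h2 : (1/2:ℝ) ≤ ‖1 - y*q^n‖ := by
      have := norm_sub_norm_le (1:ℂ) (y*q^n)
      simp only [norm_one] at this
      linarith
    exact mul_le_mul ih h2 (by norm_num) (norm_nonneg _)

lemma Tt_norm_le (y q : ℂ) (hq : ‖q‖ < 1) (hy : ‖y‖ ≤ 1/2) (n : ℕ) :
    ‖Tt y q n‖ ≤ (1/2:ℝ)^n := by
  rw [Tt, norm_div]
  have hden : (1/2:ℝ)^(n+1) ≤ ‖qPoch y q (n+1)‖ := qPoch_lower y q hq hy (n+1)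
  have hnum : ‖(-1:ℂ)^n * y^(2*n+1) * q^(n*(n-1)/2)‖ ≤ (1/2:ℝ)^(2*n+1) := by
    rw [norm_mul, norm_mul, norm_pow, norm_pow, norm_pow, norm_neg, norm_one,
        one_pow, one_mul]
    calc ‖y‖^(2*n+1) * ‖q‖^(n*(n-1)/2) ≤ (1/2:ℝ)^(2*n+1) * 1 := by
          apply mul_le_mul _ (pow_le_one₀ (norm_nonneg q) (le_of_lt hq))
            (pow_nonneg (norm_nonneg q) _) (pow_nonneg (by norm_num) _)
          exact pow_le_pow_left₀ (norm_nonneg y) hy _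
      _ = (1/2:ℝ)^(2*n+1) := by ring
  calc ‖(-1:ℂ)^n * y^(2*n+1) * q^(n*(n-1)/2)‖ / ‖qPoch y q (n+1)‖
      ≤ (1/2:ℝ)^(2*n+1) / (1/2:ℝ)^(n+1) :=
        div_le_div₀ (pow_nonneg (by norm_num) _) hnum (by positivity) hden
    _ = (1/2:ℝ)^n := by
        rw [show 2*n+1 = n + (n+1) by ring, pow_add]
        field_simp
lemma F_bound (y q : ℂ) (hq : ‖q‖ < 1) (hy : ‖y‖ ≤ 1/2) : ‖Fdef y q‖ ≤ 2 := by
  have hg : Summable (fun n : ℕ => (1/2:ℝ)^n) :=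
    summable_geometric_of_lt_one (by norm_num) (by norm_num)
  have hsn : Summable (fun n : ℕ => ‖Tt y q n‖) :=
    Summable.of_nonneg_of_le (fun n => norm_nonneg _) (Tt_norm_le y q hq hy) hg
  calc ‖Fdef y q‖ ≤ ∑' n : ℕ, ‖Tt y q n‖ := norm_tsum_le_tsum_norm hsn
    _ ≤ ∑' n : ℕ, (1/2:ℝ)^n := Summable.tsum_le_tsum (Tt_norm_le y q hq hy) hsn hg
    _ = 2 := by rw [tsum_geometric_of_lt_one (by norm_num) (by norm_num)]; norm_num

lemma psi_bound (y q : ℂ) (hq : ‖q‖ < 1) (hq0 : q ≠ 0) (hy : ‖y‖ ≤ 1/2) :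
    ‖psi1 y q‖ ≤ 1 + ∑' n : ℕ, ‖q‖^((n^2-1)/24) := by
  have hy1 : ‖y‖ ≤ 1 := by linarith
  have hmaj : Summable (fun n : ℕ => ‖q‖^((n^2-1)/24)) := by
    have := summable_maj hq hq0 1 (le_refl 1)
    simpa using this
  have hsn : Summable (fun n : ℕ => ‖Gg y q n‖) :=
    Summable.of_nonneg_of_le (fun n => norm_nonneg _) (Gg_norm_le y q hy1) hmaj
  have hPs : ‖Ps y q‖ ≤ ∑' n : ℕ, ‖q‖^((n^2-1)/24) :=
    le_trans (norm_tsum_le_tsum_norm hsn) (Summable.tsum_le_tsum (Gg_norm_le y q hy1) hsn hmaj)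
  rw [psi1_eq]
  calc ‖-y - y^2 * Ps y q‖ ≤ ‖y‖ + ‖y‖^2 * ‖Ps y q‖ := by
        calc ‖-y - y^2 * Ps y q‖ ≤ ‖-y‖ + ‖y^2 * Ps y q‖ := norm_sub_le _ _
          _ = ‖y‖ + ‖y‖^2 * ‖Ps y q‖ := by rw [norm_neg, norm_mul, norm_pow]
    _ ≤ 1 + 1 * ∑' n : ℕ, ‖q‖^((n^2-1)/24) := by
        have h1 : ‖y‖ ≤ 1 := hy1
        have h2 : ‖y‖^2 ≤ 1 := pow_le_one₀ (norm_nonneg y) hy1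
        have h3 : (0:ℝ) ≤ ‖Ps y q‖ := norm_nonneg _
        have h4 : (0:ℝ) ≤ ∑' n : ℕ, ‖q‖^((n^2-1)/24) :=
          tsum_nonneg (fun n => pow_nonneg (norm_nonneg q) _)
        have := mul_le_mul h2 hPs h3 zero_le_one
        linarith
    _ = 1 + ∑' n : ℕ, ‖q‖^((n^2-1)/24) := by ring

lemma main_zero (x q : ℂ) (hq : ‖q‖ < 1) (hq0 : q ≠ 0) (hx0 : x ≠ 0)
    (hx : ∀ ℓ : ℕ, 1 - x * q^ℓ ≠ 0) : Fdef x q + psi1 x q = 0 := by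
  set C : ℝ := 3 + ∑' n : ℕ, ‖q‖^((n^2-1)/24) with hC
  have hCpos : 0 ≤ C := by
    have : (0:ℝ) ≤ ∑' n : ℕ, ‖q‖^((n^2-1)/24) :=
      tsum_nonneg (fun n => pow_nonneg (norm_nonneg q) _)
    rw [hC]; linarith
  set b : ℕ → ℝ := fun N => ‖x‖^(3*N) * ‖q‖^(3*(N*(N-1)/2)) * C with hb
  have hbnonneg : ∀ N, 0 ≤ b N := fun N => by
    apply mul_nonneg (mul_nonneg (pow_nonneg (norm_nonneg x) _)
      (pow_nonneg (norm_nonneg q) _)) hCpos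
  -- eventual bound
  have hev : ∀ᶠ N in Filter.atTop, ‖Fdef x q + psi1 x q‖ ≤ b N := by
    filter_upwards [ev_small hq ‖x‖ (1/2) (by norm_num)] with N hN
    have hyN : ‖x * q^N‖ ≤ 1/2 := by rw [norm_mul, norm_pow]; exact hN
    have hDb : ‖Fdef (x*q^N) q + psi1 (x*q^N) q‖ ≤ C := by
      have h1 := F_bound (x*q^N) q hq hyN
      have h2 := psi_bound (x*q^N) q hq hq0 hyN
      have := norm_add_le (Fdef (x*q^N) q) (psi1 (x*q^N) q)
      rw [hC]; linarith
    rw [D_iter x q hq hq0 hx0 hx N]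
    rw [norm_mul, norm_mul, norm_mul, norm_pow, norm_pow, norm_pow, norm_neg,
        norm_one, one_pow, one_mul]
    exact mul_le_mul_of_nonneg_left hDb (by positivity) |>.trans
      (le_of_eq rfl)
  -- b tends to zero
  have hbz : Filter.Tendsto b Filter.atTop (nhds 0) := by
    have hsum : Summable b := by
      apply summable_of_ratio_norm_eventually_le (r := 1/2) (by norm_num)
      have hq3 : ‖q^3‖ < 1 := by
        rw [norm_pow]
        exact pow_lt_one₀ (norm_nonneg q) hq (by norm_num)
      filter_upwards [ev_small hq3 (‖x‖^3) (1/2) (by norm_num)] with N hN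
      have e1 : 3*((N+1)*N/2) = 3*(N*(N-1)/2) + 3*N := by
        have := tri_succ N; omega
      have e2 : (N+1)*((N+1)-1)/2 = (N+1)*N/2 := by norm_num
      rw [Real.norm_of_nonneg (hbnonneg _), Real.norm_of_nonneg (hbnonneg _), hb]
      simp only
      rw [e2, e1, show 3*(N+1) = 3*N+3 by ring, pow_add, pow_add]
      have hq3N : ‖x‖^3 * ‖q‖^(3*N) ≤ 1/2 := by
        rwa [norm_pow, ← pow_mul] at hN
      calc ‖x‖^(3*N) * ‖x‖^3 * (‖q‖^(3*(N*(N-1)/2)) * ‖q‖^(3*N)) * C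
          = (‖x‖^3 * ‖q‖^(3*N)) * (‖x‖^(3*N) * ‖q‖^(3*(N*(N-1)/2)) * C) := by ring
        _ ≤ (1/2) * (‖x‖^(3*N) * ‖q‖^(3*(N*(N-1)/2)) * C) := by
            apply mul_le_mul_of_nonneg_right hq3N
            apply mul_nonneg (mul_nonneg (pow_nonneg (norm_nonneg x) _)
              (pow_nonneg (norm_nonneg q) _)) hCpos
    exact hsum.tendsto_atTop_zero
  have : ‖Fdef x q + psi1 x q‖ ≤ 0 := ge_of_tendsto hbz hev
  have := norm_nonneg (Fdef x q + psi1 x q)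
  rw [← norm_le_zero_iff]
  linarith

lemma qPoch_inv (w q : ℂ) (hw : w ≠ 0) (hq0 : q ≠ 0) (m : ℕ) :
    qPoch w q⁻¹ m * q^(m*(m-1)/2) = (-w)^m * qPoch w⁻¹ q m := by
  induction m with
  | zero => simp [qPoch]
  | succ m ih =>
    have hqm : (q:ℂ)^m ≠ 0 := pow_ne_zero m hq0
    rw [qPoch_succ, qPoch_succ, show (m+1)*((m+1)-1)/2 = m*(m-1)/2 + m by
        simpa using tri_succ m, pow_add]
    have h1 : (1 - w * (q⁻¹)^m) * q^m = q^m - w := by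
      rw [inv_pow]
      field_simp
    have h2 : (-w) * (1 - w⁻¹ * q^m) = q^m - w := by
      field_simp
      ring
    calc qPoch w q⁻¹ m * (1 - w * (q⁻¹)^m) * (q^(m*(m-1)/2) * q^m)
        = (qPoch w q⁻¹ m * q^(m*(m-1)/2)) * ((1 - w * (q⁻¹)^m) * q^m) := by ring
      _ = ((-w)^m * qPoch w⁻¹ q m) * (q^m - w) := by rw [ih, h1]
      _ = ((-w)^m * qPoch w⁻¹ q m) * ((-w) * (1 - w⁻¹ * q^m)) := by rw [h2]
      _ = (-w)^(m+1) * (qPoch w⁻¹ q m * (1 - w⁻¹ * q^m)) := by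
          rw [pow_succ]; ring

theorem g33_inverse (w q : ℂ) (hq : ‖q‖ < 1) (hq0 : q ≠ 0) (hw : w ≠ 0)
    (hw' : ∀ ℓ : ℕ, w ≠ q ^ ℓ) :
    ∑' n : ℕ, (w ^ n)⁻¹ * (q⁻¹) ^ n / qPoch w q⁻¹ (n + 1) = psi1 w⁻¹ q := by
  have hx0 : w⁻¹ ≠ 0 := inv_ne_zero hw
  have hx : ∀ ℓ : ℕ, 1 - w⁻¹ * q^ℓ ≠ 0 := by
    intro ℓ h
    apply hw' ℓ
    have h2 : w⁻¹ * q^ℓ = 1 := by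
      have := sub_eq_zero.mp h
      linear_combination -this
    calc w = w * (w⁻¹ * q^ℓ) := by rw [h2, mul_one]
      _ = (w * w⁻¹) * q^ℓ := by ring
      _ = q^ℓ := by rw [mul_inv_cancel₀ hw, one_mul]
  have hxq : ∀ ℓ : ℕ, 1 - w * (q⁻¹)^ℓ ≠ 0 := by
    intro ℓ h
    apply hw' ℓ
    have h2 : w * (q⁻¹)^ℓ = 1 := by
      have := sub_eq_zero.mp h
      linear_combination -this
    rw [inv_pow] at h2
    field_simp at h2
    exact h2
  have hterm : ∀ n : ℕ, (w ^ n)⁻¹ * (q⁻¹) ^ n / qPoch w q⁻¹ (n + 1) = - Tt w⁻¹ q n := by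
    intro n
    have hP1 : qPoch w q⁻¹ (n+1) ≠ 0 := qPoch_ne_zero hxq (n+1)
    have hPx : qPoch w⁻¹ q (n+1) ≠ 0 := qPoch_ne_zero hx (n+1)
    have hqK : (q:ℂ)^((n+1)*n/2) ≠ 0 := pow_ne_zero _ hq0
    have key : qPoch w q⁻¹ (n+1) * q^((n+1)*n/2) = (-w)^(n+1) * qPoch w⁻¹ q (n+1) := by
      have := qPoch_inv w q hw hq0 (n+1)
      simpa using this
    rw [Tt, ← neg_div, div_eq_div_iff hP1 hPx]
    have hP : qPoch w q⁻¹ (n+1) = (-w)^(n+1) * qPoch w⁻¹ q (n+1) / q^((n+1)*n/2) :=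
      (eq_div_iff hqK).2 key
    rw [hP]
    rw [show (n+1)*n/2 = n*(n-1)/2 + n from tri_succ n, neg_pow, pow_succ, pow_add]
    field_simp
    rw [neg_pow w n]
    have hs : ((-1:ℂ))^n * (-1)^n = 1 := by
      rw [← pow_add, ← two_mul, pow_mul, neg_one_sq, one_pow]
    have hA : (1/q)^n * q^n = 1 := by rw [← mul_pow, one_div, inv_mul_cancel₀ hq0, one_pow]
    have hC : w^n * w^n * (1/w)^(2*n) = 1 := by
      rw [← pow_add, ← two_mul, ← mul_pow, one_div, mul_inv_cancel₀ hw, one_pow]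
    linear_combination qPoch (1/w) q (n+1) * q^(n*(n-1)/2) * hA
      - qPoch (1/w) q (n+1) * q^(n*(n-1)/2) * (w^n * w^n * (1/w)^(2*n)) * hs
      - qPoch (1/w) q (n+1) * q^(n*(n-1)/2) * hC
  rw [tsum_congr hterm, tsum_neg]
  have h0 := main_zero w⁻¹ q hq hq0 hx0 hx
  have : Fdef w⁻¹ q = ∑' n : ℕ, Tt w⁻¹ q n := rfl
  linear_combination -h0 + this
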